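/- Let k ≥ 7 be an integer and let G be a finite simple graph with Δ(G) ≤ k. Suppose G contains a vertex u of degree 4 whose four neighbors v, u₁, u₂, u₃ satisfy deg(v) = 3 and deg(uᵢ) ≤ 4 for i = 1, 2, 3. If G − u admits an incidence (k+3, 3)-coloring, then G admits an incidence (k+3, 3)-coloring. -/

import Mathlib

open SimpleGraph

/-- An incidence coloring of `G` with `n` colors, where `φ v u` is the color of the
incidence `(v, vu)` (meaningful when `G.Adj v u`): two distinct adjacent incidences
`(v, vu)` and `(w, wx)` receive distinct colors. Incidences `(v, e)` and `(w, f)` are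
adjacent if `v = w`, or `e = f`, or the edge `vw` equals `e` or `f`. -/
def IsIncidenceColoring {V : Type*} (G : SimpleGraph V) {n : ℕ} (φ : V → V → Fin n) : Prop :=
  ∀ ⦃v u w x : V⦄, G.Adj v u → G.Adj w x → (v, u) ≠ (w, x) →
    (v = w ∨ s(v, u) = s(w, x) ∨ s(v, w) = s(v, u) ∨ s(v, w) = s(w, x)) →
    φ v u ≠ φ w x

/-- `G` admits an incidence `(n, ℓ)`-coloring: an incidence coloring with `n` colors such
that for every vertex `v`, at most `ℓ` distinct colors appear on the incidences of the
form `(u, uv)` where `u` ranges over the neighbors of `v`. -/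
def HasIncidenceColoring {V : Type*} (G : SimpleGraph V) (n ℓ : ℕ) : Prop :=
  ∃ φ : V → V → Fin n, IsIncidenceColoring G φ ∧
    ∀ v : V, ({c : Fin n | ∃ u : V, G.Adj u v ∧ φ u v = c}).ncard ≤ ℓ

/-- The incidence chromatic number: the least `n` such that `G` admits an incidence
`n`-coloring. -/
noncomputable def incChromaticNumber {V : Type*} (G : SimpleGraph V) : ℕ :=
  sInf {n : ℕ | ∃ φ : V → V → Fin n, IsIncidenceColoring G φ}

/-- `mad(G) < q`: every nonempty subgraph `H` of `G` satisfies `2|E(H)| < q·|V(H)|`. -/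
def MadLT {V : Type*} (G : SimpleGraph V) (q : ℝ) : Prop :=
  ∀ H : G.Subgraph, H.verts.Nonempty →
    (2 * H.edgeSet.ncard : ℝ) < q * H.verts.ncard

/-!
Color `G - u` and then the eight incidences at `u`. The colors of `(u, uuᵢ)` are chosen
greedily and, where possible, among the colors already entering `uᵢ`, so that `uᵢ` still sees at
most three entering colors. Then the colors forbidden at `(uᵢ, uᵢu)` number at most `8` (at most
`7` at `v`) out of `k + 3 ≥ 10`, and all these forbidden sets contain the three colors of the
`(u, uuᵢ)`; hence their complements are not pairwise disjoint, and two of the incidences entering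
`u` can share a color. The color of `(u, uv)` comes last and avoids at most `2 + 3 + 3` colors.
-/

open Finset

theorem Set.InjOn.update_insert {ι α : Type*} [DecidableEq ι] {f : ι → α} {s : Set ι}
    {a : ι} {c : α} (hf : Set.InjOn f s) (ha : a ∉ s) (hc : c ∉ f '' s) :
    Set.InjOn (Function.update f a c) (insert a s) := by
  have heq : Set.EqOn f (Function.update f a c) s := fun x hx =>
    (Function.update_of_ne (ne_of_mem_of_not_mem hx ha) _ _).symm
  rw [Set.injOn_insert ha, Function.update_self, ← heq.image_eq]
  exact ⟨hf.congr heq, hc⟩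

theorem Finset.exists_ne_not_disjoint_of_card_lt_sum {ι α : Type*} [DecidableEq α]
    (s : Finset ι) (S : ι → Finset α) (U : Finset α) (hS : ∀ i ∈ s, S i ⊆ U)
    (h : #U < ∑ i ∈ s, #(S i)) :
    ∃ i ∈ s, ∃ j ∈ s, i ≠ j ∧ ¬Disjoint (S i) (S j) := by
  by_contra! hdisj
  have : ∑ i ∈ s, #(S i) ≤ #U := by
    rw [← card_biUnion fun i hi j hj hij => hdisj i hi j hj hij]
    exact card_le_card (biUnion_subset.mpr hS)
  omega

section ColorChoice

variable {ι α : Type*} [DecidableEq ι] [DecidableEq α] [Fintype α]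

theorem exists_notMem_notMem_and_mem_or_subset (A B P : Finset α) (hAB : Disjoint A B)
    (h : #B + #P < Fintype.card α) : ∃ c ∉ B, c ∉ P ∧ (c ∈ A ∨ A ⊆ P) := by
  by_cases hAP : A ⊆ P
  · obtain ⟨c, -, hc⟩ := exists_mem_notMem_of_card_lt_card (s := B ∪ P) (t := univ)
      ((card_union_le B P).trans_lt h)
    rw [mem_union, not_or] at hc
    exact ⟨c, hc.1, hc.2, Or.inr hAP⟩
  · obtain ⟨c, hcA, hcP⟩ := not_subset.mp hAP
    exact ⟨c, disjoint_left.mp hAB hcA, hcP, Or.inl hcA⟩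

/-- Greedy choice, taking `b w ∈ A w` whenever `A w` is not covered by the earlier choices; this
is what keeps `A w ∪ t.image b` small. -/
theorem exists_injOn_notMem_card_insert_le [Nonempty α] (A B : ι → Finset α) (ℓ : ℕ)
    (t : Finset ι) (ht : #t ≤ ℓ) (hAB : ∀ w ∈ t, Disjoint (A w) (B w))
    (hA : ∀ w ∈ t, #(A w) ≤ ℓ)    (hB : ∀ w ∈ t, #(B w) + ℓ ≤ Fintype.card α) :
    ∃ b : ι → α, Set.InjOn b t ∧ ∀ w ∈ t,
      b w ∉ B w ∧ #(insert (b w) (A w)) ≤ ℓ ∧ #(A w ∪ t.image b) < #t + ℓ := by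
  induction t using Finset.induction_on with
  | empty => exact ⟨fun _ => Classical.arbitrary α, by simp, by simp⟩
  | insert w t hwt ih =>
    simp only [mem_insert, forall_eq_or_imp, card_insert_of_notMem hwt] at ht hAB hA hB ⊢
    obtain ⟨b, hinj, hb⟩ := ih (by omega) hAB.2 hA.2 hB.2
    obtain ⟨c, hcB, hcP, hcA⟩ :=
      exists_notMem_notMem_and_mem_or_subset (A w) (B w) (t.image b) hAB.1
        (by have := card_image_le (s := t) (f := b); omega)
    have hb' : ∀ w' ∈ t, Function.update b w c w' = b w' := fun w' hw' =>
      Function.update_of_ne (ne_of_mem_of_not_mem hw' hwt) _ _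
    have himage : (insert w t).image (Function.update b w c) = insert c (t.image b) := by
      rw [image_insert, Function.update_self, image_congr hb']
    have hcardP : #(t.image b) = #t := card_image_of_injOn hinj
    refine ⟨Function.update b w c, ?_, ⟨by simpa using hcB, ?_, ?_⟩, fun w' hw' => ?_⟩
    · rw [coe_insert]
      exact hinj.update_insert (mod_cast hwt) (by rwa [← coe_image, mem_coe])
    · rw [Function.update_self]
      rcases hcA with hcA | hAP
      · rw [insert_eq_of_mem hcA]; exact hA.1
      · have := card_le_card hAP; have := card_insert_le c (A w); omega
    · rw [himage]
      rcases hcA with hcA | hAP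
      · rw [union_insert, insert_eq_of_mem (mem_union_left _ hcA)]
        have := card_union_le (A w) (t.image b); omega
      · rw [union_eq_right.mpr (hAP.trans (subset_insert c _))]
        have := card_insert_le c (t.image b); omega
    · obtain ⟨hbB, hbA, hbU⟩ := hb w' hw'
      refine ⟨by rwa [hb' w' hw'], by rwa [hb' w' hw'], ?_⟩
      rw [himage, union_insert]
      have := card_insert_le c (A w' ∪ t.image b); omega

theorem exists_forall_notMem_card_image_lt (s : Finset ι) (E : ι → Finset α) (T : Finset α)
    (hT : ∀ i ∈ s, T ⊆ E i) (hE : ∀ i ∈ s, #(E i) < Fintype.card α)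
    (h : Fintype.card α - #T < ∑ i ∈ s, #(E i)ᶜ) :
    ∃ a : ι → α, (∀ i ∈ s, a i ∉ E i) ∧ #(s.image a) < #s := by
  obtain ⟨i, hi, j, hj, hij, hcommon⟩ :=
    s.exists_ne_not_disjoint_of_card_lt_sum (fun i => (E i)ᶜ) Tᶜ
      (fun i hi => compl_subset_compl.mpr (hT i hi)) (by rwa [card_compl])
  obtain ⟨c, hci, hcj⟩ := not_disjoint_iff.mp hcommon
  rw [mem_compl] at hci hcj
  have : Nonempty α := ⟨c⟩
  have hfree : ∀ k ∈ s, ∃ b, b ∉ E k := fun k hk => by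
    obtain ⟨b, -, hb⟩ := exists_mem_notMem_of_card_lt_card (t := univ) (hE k hk)
    exact ⟨b, hb⟩
  choose! b hb using hfree
  refine ⟨fun k => if k = i ∨ k = j then c else b k, fun k hk => ?_, ?_⟩
  · dsimp only
    split_ifs with hk'
    · rcases hk' with rfl | rfl <;> assumption
    · exact hb k hk
  · refine lt_of_le_of_ne card_image_le fun hcard => hij (card_image_iff.mp hcard hi hj ?_)
    simp

theorem exists_forall_notMem_card_image_le_three (hα : 10 ≤ Fintype.card α) (s : Finset ι)
    (hs : #s = 4) {v : ι} (hv : v ∈ s) (E : ι → Finset α) (T : Finset α) (hT : #T = 3)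
    (hTE : ∀ w ∈ s, T ⊆ E w) (hEv : #(E v) ≤ 7) (hE : ∀ w ∈ s.erase v, #(E w) ≤ 8) :
    ∃ a : ι → α, (∀ w ∈ s, a w ∉ E w) ∧ #(s.image a) ≤ 3 := by
  have hsum_erase := card_nsmul_le_sum (s.erase v) (fun w => #(E w)ᶜ) (Fintype.card α - 8)
    fun w hw => by rw [card_compl]; have := hE w hw; omega
  rw [smul_eq_mul, card_erase_of_mem hv, hs] at hsum_erase
  have hsum : Fintype.card α - #T < ∑ w ∈ s, #(E w)ᶜ := by
    rw [← add_sum_erase s _ hv, card_compl, hT]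
    omega
  have hE' : ∀ w ∈ s, #(E w) < Fintype.card α := fun w hw => by
    rcases eq_or_ne w v with rfl | hwv
    · omega
    · have := hE w (mem_erase.mpr ⟨hwv, hw⟩); omega
  obtain ⟨a, ha, hcard⟩ := exists_forall_notMem_card_image_lt s E T hTE hE' hsum
  exact ⟨a, ha, by omega⟩

/-- Colors for the incidences at a vertex `u` with neighbourhood `s`: `A w` and `B w` are the
colors entering and leaving `w` in `G - u`, and `out w`, `inc w` are the colors proposed for
`(u, uw)` and `(w, wu)`. -/
structure IsAdmissibleExtension (s : Finset ι) (A B : ι → Finset α) (ℓ : ℕ)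
    (out inc : ι → α) : Prop where
  injOn_out : Set.InjOn out s
  out_ne_inc : ∀ w ∈ s, ∀ w' ∈ s, out w ≠ inc w'
  out_notMem_right : ∀ w ∈ s, out w ∉ B w
  inc_notMem_left : ∀ w ∈ s, inc w ∉ A w
  inc_notMem_right : ∀ w ∈ s, inc w ∉ B w
  card_insert_out_le : ∀ w ∈ s, #(insert (out w) (A w)) ≤ ℓ
  card_image_inc_le : #(s.image inc) ≤ ℓ

theorem exists_isAdmissibleExtension (hα : 10 ≤ Fintype.card α) (s : Finset ι) (hs : #s = 4)
    (v : ι) (hv : v ∈ s) (A B : ι → Finset α) (hAB : ∀ w ∈ s, Disjoint (A w) (B w))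
    (hA : ∀ w ∈ s, #(A w) ≤ 3) (hB : ∀ w ∈ s, #(B w) ≤ 3) (hAv : #(A v) ≤ 2)
    (hBv : #(B v) ≤ 2) :
    ∃ out inc : ι → α, IsAdmissibleExtension s A B 3 out inc := by
  have : Nonempty α := Fintype.card_pos_iff.mp (by omega)
  set t := s.erase v with ht_def
  have hts : ∀ w ∈ t, w ∈ s := fun w hw => mem_of_mem_erase hw
  have ht : #t = 3 := by rw [card_erase_of_mem hv, hs]
  obtain ⟨b, hinj, hb⟩ := exists_injOn_notMem_card_insert_le A B 3 t ht.le
    (fun w hw => hAB w (hts w hw)) (fun w hw => hA w (hts w hw))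
    (fun w hw => by have := hB w (hts w hw); omega)
  set T := t.image b
  have hT : #T = 3 := (card_image_of_injOn hinj).trans ht
  obtain ⟨a, ha, hacard⟩ := exists_forall_notMem_card_image_le_three hα s hs hv
    (fun w => B w ∪ (A w ∪ T)) T hT (fun _ _ => subset_union_right.trans subset_union_right)
    (by have := card_union_le (B v) (A v ∪ T); have := card_union_le (A v) T; omega)
    (fun w hw => by
      have := card_union_le (B w) (A w ∪ T); have := hB w (hts w hw); have := (hb w hw).2.2
      omega)
  simp only [mem_union, not_or] at ha
  obtain ⟨bv, -, hbv⟩ := exists_mem_notMem_of_card_lt_card (t := univ)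
    (s := B v ∪ T ∪ s.image a) (by
      have := card_union_le (B v ∪ T) (s.image a); have := card_union_le (B v) T
      rw [card_univ]; omega)
  simp only [mem_union, not_or] at hbv
  obtain ⟨⟨hbvB, hbvT⟩, hbva⟩ := hbv
  set out := Function.update b v bv
  have hout : ∀ w ∈ s, (w = v ∧ out w = bv) ∨ (w ∈ t ∧ out w = b w) := fun w hw => by
    rcases eq_or_ne w v with rfl | hwv
    · exact Or.inl ⟨rfl, Function.update_self ..⟩
    · exact Or.inr ⟨mem_erase.mpr ⟨hwv, hw⟩, Function.update_of_ne hwv _ _⟩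
  refine ⟨out, a, ⟨?_, fun w hw w' hw' => ?_, fun w hw => ?_, fun w hw => (ha w hw).2.1,
    fun w hw => (ha w hw).1, fun w hw => ?_, by omega⟩⟩
  · rw [← insert_erase hv, ← ht_def, coe_insert]
    exact hinj.update_insert (mod_cast notMem_erase v s) (by rwa [← coe_image, mem_coe])
  all_goals rcases hout w hw with ⟨rfl, h⟩ | ⟨hwt, h⟩ <;> rw [h]
  · exact fun heq => hbva (heq ▸ mem_image_of_mem a hw')
  · exact fun heq => (ha w' hw').2.2 (heq ▸ mem_image_of_mem b hwt)
  · exact hbvB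
  · exact (hb w hwt).1
  · have := card_insert_le bv (A w); omega
  · exact (hb w hwt).2.1

end ColorChoice

section Extension

variable {V : Type*} [DecidableEq V] {n : ℕ}

def extendColoringAt (u : V) (out inc : V → Fin n) (ψ : V → V → Fin n) : V → V → Fin n :=
  fun x y => if x = u then out y else if y = u then inc x else ψ x y

variable {u x y : V} {out inc : V → Fin n} {ψ : V → V → Fin n}

@[simp]
theorem extendColoringAt_self_left : extendColoringAt u out inc ψ u y = out y :=
  if_pos rfl

@[simp]
theorem extendColoringAt_self_right (hx : x ≠ u) : extendColoringAt u out inc ψ x u = inc x := by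
  simp [extendColoringAt, hx]

theorem extendColoringAt_of_ne (hx : x ≠ u) (hy : y ≠ u) :
    extendColoringAt u out inc ψ x y = ψ x y := by
  simp [extendColoringAt, hx, hy]

end Extension

namespace SimpleGraph

variable {V : Type*} (G : SimpleGraph V) {n : ℕ}

theorem isIncidenceColoring_iff (φ : V → V → Fin n) :
    IsIncidenceColoring G φ ↔ ∀ w, Set.InjOn (φ w) (G.neighborSet w) ∧
      ∀ ⦃x y⦄, G.Adj x w → G.Adj w y → φ x w ≠ φ w y := by
  constructor
  · intro h w
    refine ⟨fun y hy y' hy' hyy' => ?_, fun x y hx hy => ?_⟩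
    · by_contra hne
      exact h hy hy' (by simpa using hne) (Or.inl rfl) hyy'
    · exact h hx hy (by simp [hx.ne]) (Or.inr (Or.inr (Or.inl rfl)))
  · rintro h p q r t hpq hrt hne hcond
    rcases hcond with rfl | hpq_rt | hrq | hpt
    · exact fun heq => hne (by rw [(h p).1 hpq hrt heq])
    · rcases Sym2.eq_iff.mp hpq_rt with ⟨rfl, rfl⟩ | ⟨rfl, rfl⟩
      · exact absurd rfl hne
      · exact (h q).2 hpq hrt
    · rcases Sym2.eq_iff.mp hrq with ⟨-, rfl⟩ | ⟨rfl, -⟩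
      · exact (h r).2 hpq hrt
      · exact absurd rfl hpq.ne
    · rcases Sym2.eq_iff.mp hpt with ⟨-, rfl⟩ | ⟨rfl, -⟩
      · exact absurd rfl hrt.ne
      · exact ((h p).2 hrt hpq).symm

theorem _root_.HasIncidenceColoring.deleteIncidenceSet [NeZero n] {ℓ : ℕ} (u : V)
    (h : HasIncidenceColoring (G.induce ({u}ᶜ : Set V)) n ℓ) :
    HasIncidenceColoring (G.deleteIncidenceSet u) n ℓ := by
  classical
  obtain ⟨φ, hφ, hφℓ⟩ := h
  rw [isIncidenceColoring_iff] at hφ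
  set ψ : V → V → Fin n := fun x y =>
    if h : x ≠ u ∧ y ≠ u then φ ⟨x, h.1⟩ ⟨y, h.2⟩ else 0
  have hψ : ∀ x y (hx : x ≠ u) (hy : y ≠ u), ψ x y = φ ⟨x, hx⟩ ⟨y, hy⟩ :=
    fun x y hx hy => dif_pos ⟨hx, hy⟩
  refine ⟨ψ, (isIncidenceColoring_iff _ _).mpr fun w => ?_, fun w => ?_⟩
  · by_cases hw : w = u
    · subst hw
      have hN : (G.deleteIncidenceSet w).neighborSet w = ∅ := by
        ext; simp [deleteIncidenceSet_adj]
      simp [hN, deleteIncidenceSet_adj]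
    obtain ⟨hinj, hdisj⟩ := hφ ⟨w, hw⟩
    refine ⟨fun y hy y' hy' heq => ?_, fun x y hx hy => ?_⟩
    · rw [mem_neighborSet, deleteIncidenceSet_adj] at hy hy'
      rw [hψ w y hw hy.2.2, hψ w y' hw hy'.2.2] at heq
      exact congrArg Subtype.val (hinj (by simpa using hy.1) (by simpa using hy'.1) heq)
    · rw [deleteIncidenceSet_adj] at hx hy
      rw [hψ x w hx.2.1 hw, hψ w y hw hy.2.2]
      exact hdisj (by simpa using hx.1) (by simpa using hy.1)
  · by_cases hw : w = u
    · subst hw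
      simp [deleteIncidenceSet_adj]
    refine (Set.ncard_le_ncard ?_).trans (hφℓ ⟨w, hw⟩)
    rintro c ⟨x, hxw, rfl⟩
    rw [deleteIncidenceSet_adj] at hxw
    exact ⟨⟨x, hxw.2.1⟩, by simpa using hxw.1, (hψ x w hxw.2.1 hw).symm⟩

variable [Fintype V] [DecidableRel G.Adj]

def inColors (φ : V → V → Fin n) (w : V) : Finset (Fin n) :=
  (G.neighborFinset w).image (φ · w)

def outColors (φ : V → V → Fin n) (w : V) : Finset (Fin n) :=
  (G.neighborFinset w).image (φ w)

variable {G} {φ : V → V → Fin n} {w : V} {c : Fin n}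

@[simp]
theorem mem_inColors : c ∈ G.inColors φ w ↔ ∃ x, G.Adj x w ∧ φ x w = c := by
  simp [inColors, adj_comm]

@[simp]
theorem mem_outColors : c ∈ G.outColors φ w ↔ ∃ y, G.Adj w y ∧ φ w y = c := by
  simp [outColors]

theorem card_inColors_le : #(G.inColors φ w) ≤ G.degree w :=
  card_image_le

theorem card_outColors_le : #(G.outColors φ w) ≤ G.degree w :=
  card_image_le

theorem _root_.IsIncidenceColoring.disjoint_inColors_outColors (h : IsIncidenceColoring G φ)
    (w : V) :
    Disjoint (G.inColors φ w) (G.outColors φ w) := by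
  rw [Finset.disjoint_left]
  rintro _ hc hc'
  obtain ⟨x, hx, rfl⟩ := mem_inColors.mp hc
  obtain ⟨y, hy, hxy⟩ := mem_outColors.mp hc'
  exact ((isIncidenceColoring_iff G φ).mp h w).2 hx hy hxy.symm

variable (G) in
theorem hasIncidenceColoring_iff {ℓ : ℕ} :
    HasIncidenceColoring G n ℓ ↔
      ∃ φ : V → V → Fin n, IsIncidenceColoring G φ ∧
        ∀ w, #(G.inColors φ w) ≤ ℓ := by
  have hset : ∀ (φ : V → V → Fin n) w,
      {c : Fin n | ∃ u, G.Adj u w ∧ φ u w = c} = ↑(G.inColors φ w) := fun φ w => by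
    ext; simp
  simp only [HasIncidenceColoring, hset, Set.ncard_coe_finset]

variable [DecidableEq V] {ℓ : ℕ} {u : V} {out inc : V → Fin n} {ψ : V → V → Fin n}

variable (G) in
theorem degree_deleteIncidenceSet_add_one (h : G.Adj u w) :
    (G.deleteIncidenceSet u).degree w + 1 = G.degree w := by
  have : (G.deleteIncidenceSet u).neighborFinset w = (G.neighborFinset w).erase u := by
    ext x; simp [deleteIncidenceSet_adj, h.ne', and_comm]
  rw [← card_neighborFinset_eq_degree, this, card_erase_add_one (by simpa using h.symm),
    card_neighborFinset_eq_degree]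

theorem _root_.IsIncidenceColoring.extendColoringAt
    (hψ : IsIncidenceColoring (G.deleteIncidenceSet u) ψ)
    (hext : IsAdmissibleExtension (G.neighborFinset u) ((G.deleteIncidenceSet u).inColors ψ)
      ((G.deleteIncidenceSet u).outColors ψ) ℓ out inc) :
    IsIncidenceColoring G (extendColoringAt u out inc ψ) := by
  rw [isIncidenceColoring_iff] at hψ ⊢
  have hH : ∀ {x y}, G.Adj x y → x ≠ u → y ≠ u → (G.deleteIncidenceSet u).Adj x y :=
    fun h hx hy => deleteIncidenceSet_adj.mpr ⟨h, hx, hy⟩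
  have hN : ∀ {x}, G.Adj x u → x ∈ G.neighborFinset u := fun h =>
    (mem_neighborFinset ..).mpr h.symm
  intro w
  by_cases hw : w = u
  · subst w
    refine ⟨fun y hy y' hy' heq => ?_, fun x y hx hy => ?_⟩
    · simp only [extendColoringAt_self_left] at heq
      exact hext.injOn_out (by simpa using hy) (by simpa using hy') heq
    · rw [extendColoringAt_self_right hx.ne, extendColoringAt_self_left]
      exact (hext.out_ne_inc y (hN hy.symm) x (hN hx)).symm
  obtain ⟨hinj, hdisj⟩ := hψ w
  refine ⟨fun y hy y' hy' heq => ?_, fun x y hx hy => ?_⟩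
  · have hy : G.Adj w y := hy
    have hy' : G.Adj w y' := hy'
    by_cases hyu : y = u <;> by_cases hy'u : y' = u
    · rw [hyu, hy'u]
    · rw [hyu, extendColoringAt_self_right hw, extendColoringAt_of_ne hw hy'u] at heq
      exact absurd (mem_outColors.mpr ⟨y', hH hy' hw hy'u, heq.symm⟩)
        (hext.inc_notMem_right w (hN (hyu ▸ hy)))
    · rw [hy'u, extendColoringAt_self_right hw, extendColoringAt_of_ne hw hyu] at heq
      exact absurd (mem_outColors.mpr ⟨y, hH hy hw hyu, heq⟩)
        (hext.inc_notMem_right w (hN (hy'u ▸ hy')))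
    · rw [extendColoringAt_of_ne hw hyu, extendColoringAt_of_ne hw hy'u] at heq
      exact hinj (hH hy hw hyu) (hH hy' hw hy'u) heq
  · by_cases hxu : x = u <;> by_cases hyu : y = u
    · rw [hxu, hyu, extendColoringAt_self_left, extendColoringAt_self_right hw]
      exact hext.out_ne_inc w (hN (hyu ▸ hy)) w (hN (hyu ▸ hy))
    · rw [hxu, extendColoringAt_self_left, extendColoringAt_of_ne hw hyu]
      exact fun heq => hext.out_notMem_right w (hN (hxu ▸ hx.symm))
        (mem_outColors.mpr ⟨y, hH hy hw hyu, heq.symm⟩)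
    · rw [hyu, extendColoringAt_of_ne hxu hw, extendColoringAt_self_right hw]
      exact fun heq => hext.inc_notMem_left w (hN (hyu ▸ hy))
        (mem_inColors.mpr ⟨x, hH hx hxu hw, heq⟩)
    · rw [extendColoringAt_of_ne hxu hw, extendColoringAt_of_ne hw hyu]
      exact hdisj (hH hx hxu hw) (hH hy hw hyu)

theorem card_inColors_extendColoringAt_le
    (hψℓ : ∀ w, #((G.deleteIncidenceSet u).inColors ψ w) ≤ ℓ)
    (hext : IsAdmissibleExtension (G.neighborFinset u) ((G.deleteIncidenceSet u).inColors ψ)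
      ((G.deleteIncidenceSet u).outColors ψ) ℓ out inc) (w : V) :
    #(G.inColors (extendColoringAt u out inc ψ) w) ≤ ℓ := by
  by_cases hw : w = u
  · subst w
    refine (card_le_card fun c hc => ?_).trans hext.card_image_inc_le
    obtain ⟨x, hx, rfl⟩ := mem_inColors.mp hc
    rw [extendColoringAt_self_right hx.ne]
    exact mem_image_of_mem inc ((mem_neighborFinset ..).mpr hx.symm)
  have hold : ∀ x, G.Adj x w → x ≠ u →
      extendColoringAt u out inc ψ x w ∈ (G.deleteIncidenceSet u).inColors ψ w := by
    intro x hx hxu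
    rw [extendColoringAt_of_ne hxu hw]
    exact mem_inColors.mpr ⟨x, deleteIncidenceSet_adj.mpr ⟨hx, hxu, hw⟩, rfl⟩
  by_cases hadj : G.Adj u w
  · refine (card_le_card fun c hc => ?_).trans (hext.card_insert_out_le w (by simpa using hadj))
    obtain ⟨x, hx, rfl⟩ := mem_inColors.mp hc
    by_cases hxu : x = u
    · simp [hxu]
    · exact mem_insert_of_mem (hold x hx hxu)
  · refine (card_le_card fun c hc => ?_).trans (hψℓ w)
    obtain ⟨x, hx, rfl⟩ := mem_inColors.mp hc
    exact hold x hx (by rintro rfl; exact hadj hx)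

end SimpleGraph

theorem incidence_extend_four_vertex_small_neighbors_general {V : Type*} [Fintype V] (G : SimpleGraph V)
    [DecidableRel G.Adj] (k : ℕ) (hk : 7 ≤ k)
    (u v u₁ u₂ u₃ : V) (hv : G.Adj u v) (h1 : G.Adj u u₁) (h2 : G.Adj u u₂) (h3 : G.Adj u u₃)
    (hv1 : v ≠ u₁) (hv2 : v ≠ u₂) (hv3 : v ≠ u₃)
    (h12 : u₁ ≠ u₂) (h13 : u₁ ≠ u₃) (h23 : u₂ ≠ u₃)
    (hdu : G.degree u = 4) (hdv : G.degree v = 3)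
    (hd1 : G.degree u₁ ≤ 4) (hd2 : G.degree u₂ ≤ 4) (hd3 : G.degree u₃ ≤ 4)
    (hcol : HasIncidenceColoring (G.induce ({u}ᶜ : Set V)) (k + 3) 3) :
    HasIncidenceColoring G (k + 3) 3 := by
  classical
  obtain ⟨ψ, hψ, hψℓ⟩ :=
    (hasIncidenceColoring_iff (G.deleteIncidenceSet u)).mp (hcol.deleteIncidenceSet G u)
  have hN : G.neighborFinset u = {v, u₁, u₂, u₃} := by
    refine (eq_of_subset_of_card_le (s := {v, u₁, u₂, u₃}) ?_ ?_).symm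
    · simp [insert_subset_iff, hv, h1, h2, h3]
    · rw [card_neighborFinset_eq_degree, hdu,
        card_eq_four.mpr ⟨v, u₁, u₂, u₃, hv1, hv2, hv3, h12, h13, h23, rfl⟩]
  have hdegH : ∀ w ∈ G.neighborFinset u, (G.deleteIncidenceSet u).degree w ≤ 3 := by
    intro w hw
    have := G.degree_deleteIncidenceSet_add_one ((mem_neighborFinset ..).mp hw)
    rw [hN] at hw
    simp only [mem_insert, mem_singleton] at hw
    rcases hw with rfl | rfl | rfl | rfl <;> omega
  have hdegHv : (G.deleteIncidenceSet u).degree v ≤ 2 := by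
    have := G.degree_deleteIncidenceSet_add_one hv; omega
  obtain ⟨out, inc, hext⟩ := exists_isAdmissibleExtension (α := Fin (k + 3)) (by simp; omega)
    (G.neighborFinset u) (by rw [card_neighborFinset_eq_degree, hdu]) v (by simpa using hv)
    ((G.deleteIncidenceSet u).inColors ψ) ((G.deleteIncidenceSet u).outColors ψ)
    (fun w _ => hψ.disjoint_inColors_outColors w)
    (fun w hw => card_inColors_le.trans (hdegH w hw))
    (fun w hw => card_outColors_le.trans (hdegH w hw))
    (card_inColors_le.trans hdegHv) (card_outColors_le.trans hdegHv)
  exact (hasIncidenceColoring_iff G).mpr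
    ⟨_, hψ.extendColoringAt hext, card_inColors_extendColoringAt_le hψℓ hext⟩

theorem incidence_extend_four_vertex_small_neighbors {V : Type*} [Fintype V] (G : SimpleGraph V)
    [DecidableRel G.Adj] (k : ℕ) (hk : 7 ≤ k) (hΔ : G.maxDegree ≤ k)
    (u v u₁ u₂ u₃ : V) (hv : G.Adj u v) (h1 : G.Adj u u₁) (h2 : G.Adj u u₂) (h3 : G.Adj u u₃)
    (hv1 : v ≠ u₁) (hv2 : v ≠ u₂) (hv3 : v ≠ u₃)
    (h12 : u₁ ≠ u₂) (h13 : u₁ ≠ u₃) (h23 : u₂ ≠ u₃)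
    (hdu : G.degree u = 4) (hdv : G.degree v = 3)
    (hd1 : G.degree u₁ ≤ 4) (hd2 : G.degree u₂ ≤ 4) (hd3 : G.degree u₃ ≤ 4)
    (hcol : HasIncidenceColoring (G.induce ({u}ᶜ : Set V)) (k + 3) 3) :
    HasIncidenceColoring G (k + 3) 3 :=
  incidence_extend_four_vertex_small_neighbors_general G k hk u v u₁ u₂ u₃ hv h1 h2 h3 hv1 hv2 hv3
    h12 h13 h23 hdu hdv hd1 hd2 hd3 hcol
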